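/- arXiv:2507.11154 — 5 statements merged into one kernel-verified Lean document; each statement's English description precedes it below -/
import Mathlib

section
/- Let F be a distribution function in the class L_{β,γ}. Then F is light-tailed (i.e. there exists λ > 0 with ∫_0^∞ e^{λx} dF(x) < ∞) if and only if β ≤ 0. -/
open Filter MeasureTheory Real Topology

/-- A function `ℓ` is slowly varying if `ℓ(λ x)/ℓ(x) → 1` as `x → ∞` for every `λ > 0`. -/
def SlowlyVarying (ℓ : ℝ → ℝ) : Prop :=
  ∀ lam : ℝ, 0 < lam → Tendsto (fun x => ℓ (lam * x) / ℓ x) atTop (nhds 1)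

/-- Membership of a (tail of a) distribution function `F` in the class `L_{β,γ}`. -/
def MemClassL (β : ℝ) (γ : EReal) (F : ℝ → ℝ) : Prop :=
  ∃ (x₀ C : ℝ) (ℓ : ℝ → ℝ),
    0 ≤ x₀ ∧ 0 < C ∧ Measurable ℓ ∧ (∀ᶠ t in atTop, 0 < ℓ t) ∧
    SlowlyVarying ℓ ∧
    Tendsto (fun t => (ℓ t : EReal)) atTop (nhds γ) ∧
    Tendsto (fun x => (1 - F x) * Real.exp (∫ t in x₀..x, ℓ t * t ^ (-β)))
      atTop (nhds C)

open Set Asymptotics ProbabilityTheory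

/-!
Write `T x = μ (x, ∞)` and `I x = ∫_{x₀}^x f` with `f t = ℓ t t^{-β}`. Membership in `L_{β,γ}`
says `T x e^{I x} → C > 0`, i.e. `T ≍ e^{-I}`. By the Chernoff bound and the layer-cake formula,
`μ` is light-tailed iff `T = O(e^{-c x})` for some `c > 0`, hence iff `c x - I x` is bounded
above for some `c > 0`.

If `β ≤ 0`, then `f ≥ ℓ` on `[1, ∞)` and `ℓ → γ > 0`, so `I` grows at least linearly. If `β > 0`,
slow variation gives `f (2t) ≤ 2^{-β/2} f t` eventually, so `J x = ∫_X^x f` satisfies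
`J (2x) ≤ J (2X) + 2^{1-β/2} J x`. Since `2^{1-β/2} < 2`, this forces `J (2ⁿ X) / 2ⁿ → 0`, which
rules out linear growth.
-/

section Tail

variable (μ : Measure ℝ) [IsFiniteMeasure μ]

lemma measureReal_Ioi_isBigO_of_lintegral_exp_lt_top {c : ℝ} (hc : 0 ≤ c)
    (h : ∫⁻ x, ENNReal.ofReal (exp (c * x)) ∂μ < ⊤) :
    (fun x => μ.real (Ioi x)) =O[atTop] fun x => exp (-c * x) := by
  have hint : Integrable (fun x => exp (c * id x)) μ :=
    ⟨by fun_prop, (hasFiniteIntegral_iff_ofReal (ae_of_all _ fun _ => (exp_pos _).le)).2 h⟩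
  refine IsBigO.of_bound (mgf id μ c) (Eventually.of_forall fun x => ?_)
  rw [norm_of_nonneg measureReal_nonneg, norm_of_nonneg (exp_pos _).le, mul_comm]
  exact (measureReal_mono fun y (hy : x < y) => hy.le).trans
    (measure_ge_le_exp_mul_mgf x hc hint)

lemma lintegral_exp_lt_top_of_measureReal_Ioi_isBigO {c lam : ℝ} (hlam : 0 ≤ lam) (hc : lam < c)
    (h : (fun x => μ.real (Ioi x)) =O[atTop] fun x => exp (-c * x)) :
    ∫⁻ x, ENNReal.ofReal (exp (lam * x)) ∂μ < ⊤ := by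
  have hlayer := lintegral_comp_eq_lintegral_meas_lt_mul μ (f := fun x => max x 0)
    (g := fun t => lam * exp (lam * t)) (ae_of_all _ fun x => le_max_right x 0)
    (by fun_prop) (fun t _ => (by fun_prop : Continuous _).intervalIntegrable _ _)
    (ae_of_all _ fun t => by positivity)
  have hloc : LocallyIntegrableOn (fun t => μ.real (Ioi t) * (lam * exp (lam * t))) (Ici 0) :=
    ((Antitone.locallyIntegrable fun _ _ hst => measureReal_mono (Ioi_subset_Ioi hst)
      ).locallyIntegrableOn _).mul_continuousOn (by fun_prop) isClosed_Ici.isLocallyClosed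
  have hdecay : IntegrableOn (fun t => lam * exp (-(c - lam) * t)) (Ioi 0) :=
    (exp_neg_integrableOn_Ioi 0 (sub_pos.2 hc)).const_mul lam
  have hint : IntegrableOn (fun t => μ.real (Ioi t) * (lam * exp (lam * t))) (Ioi 0) := by
    refine (integrableOn_Ici_iff_integrableOn_Ioi (by finiteness)).1 <|
      hloc.integrableOn_of_isBigO_atTop (h.mul (isBigO_refl _ _))
        ⟨Ioi 0, Ioi_mem_atTop 0, IntegrableOn.congr_fun hdecay (fun t _ => ?_) measurableSet_Ioi⟩
    rw [mul_left_comm, ← exp_add]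
    ring_nf
  have hpoint : ∀ x, ENNReal.ofReal (exp (lam * x)) ≤
      1 + ENNReal.ofReal (∫ t in 0..max x 0, lam * exp (lam * t)) := by
    intro x
    have hderiv : ∀ t ∈ uIcc 0 (max x 0),
        HasDerivAt (fun t => exp (lam * t)) (lam * exp (lam * t)) t :=
      fun t _ => by simpa [mul_comm] using ((hasDerivAt_id t).const_mul lam).exp
    rw [intervalIntegral.integral_eq_sub_of_hasDerivAt hderiv
        ((by fun_prop : Continuous _).intervalIntegrable _ _),
      mul_zero, exp_zero, ← ENNReal.ofReal_one, ← ENNReal.ofReal_add zero_le_one, add_sub_cancel]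
    · gcongr
      exact le_max_left x 0
    · simp only [sub_nonneg, one_le_exp_iff]
      positivity
  calc ∫⁻ x, ENNReal.ofReal (exp (lam * x)) ∂μ
      ≤ ∫⁻ x, 1 + ENNReal.ofReal (∫ t in 0..max x 0, lam * exp (lam * t)) ∂μ :=
        lintegral_mono hpoint
    _ = μ univ + ∫⁻ t in Ioi 0, μ {x | t < max x 0} * ENNReal.ofReal (lam * exp (lam * t)) := by
      rw [lintegral_add_left measurable_const, lintegral_const, one_mul, hlayer]
    _ = μ univ + ∫⁻ t in Ioi 0, ENNReal.ofReal (μ.real (Ioi t) * (lam * exp (lam * t))) := by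
      congr 1
      refine setLIntegral_congr_fun measurableSet_Ioi fun t (ht : 0 < t) => ?_
      have : {x | t < max x 0} = Ioi t := by ext x; simp [ht.not_gt]
      rw [this, ENNReal.ofReal_mul measureReal_nonneg, ofReal_measureReal]
    _ < ⊤ := ENNReal.add_lt_top.2 ⟨measure_lt_top _ _, hint.lintegral_lt_top⟩

theorem exists_lintegral_exp_lt_top_iff :
    (∃ lam, 0 < lam ∧ ∫⁻ x, ENNReal.ofReal (exp (lam * x)) ∂μ < ⊤) ↔
      ∃ c, 0 < c ∧ (fun x => μ.real (Ioi x)) =O[atTop] fun x => exp (-c * x) :=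
  ⟨fun ⟨lam, hlam, h⟩ =>
    ⟨lam, hlam, measureReal_Ioi_isBigO_of_lintegral_exp_lt_top μ hlam.le h⟩,
    fun ⟨c, hc, h⟩ => ⟨c / 2, half_pos hc,
      lintegral_exp_lt_top_of_measureReal_Ioi_isBigO μ (half_pos hc).le (half_lt_self hc) h⟩⟩

end Tail

lemma isTheta_exp_neg_of_tendsto_mul_exp {α : Type*} {l : Filter α} {g I : α → ℝ} {C : ℝ}
    (hC : C ≠ 0) (h : Tendsto (fun x => g x * exp (I x)) l (𝓝 C)) :
    g =Θ[l] fun x => exp (-I x) :=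
  (isTheta_of_div_tendsto_nhds_ne_zero (by simpa [exp_neg, div_inv_eq_mul] using h) hC).symm

lemma isBigO_exp_neg_iff_isBoundedUnder {l : Filter ℝ} {I : ℝ → ℝ} {c : ℝ} :
    ((fun x => exp (-I x)) =O[l] fun x => exp (-c * x)) ↔
      IsBoundedUnder (· ≤ ·) l fun x => c * x - I x := by
  have hdiff : ((fun x => -I x) - fun x => -c * x) = fun x => c * x - I x := by
    ext x
    simp only [Pi.sub_apply]
    ring
  rw [isBigO_exp_comp_exp_comp, hdiff]

lemma integrableOn_Ioc_of_tendsto_mul_exp_integral {g f : ℝ → ℝ} {a C : ℝ}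
    (hg : Tendsto g atTop (𝓝 0)) (hC : C ≠ 0)
    (h : Tendsto (fun x => g x * exp (∫ t in a..x, f t)) atTop (𝓝 C)) (b : ℝ) :
    IntegrableOn f (Ioc a b) := by
  by_contra hb
  -- past `b` the interval integral takes its junk value `0`
  have hzero : ∀ᶠ x in atTop, ∫ t in a..x, f t = 0 := by
    filter_upwards [eventually_ge_atTop b] with x hx
    refine intervalIntegral.integral_undef fun hx' => hb ?_
    exact (intervalIntegrable_iff.1 hx').mono_set
      (Ioc_subset_Ioc (min_le_left a x) (hx.trans (le_max_right a x)))
  refine hC (tendsto_nhds_unique (h.congr' ?_) hg)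
  filter_upwards [hzero] with x hx
  rw [hx, exp_zero, mul_one]

lemma tendsto_div_two_pow_of_le_add_mul {u : ℕ → ℝ} {A ρ : ℝ} (hu : ∀ n, 0 ≤ u n) (hA : 0 ≤ A)
    (hρ : ρ < 2) (hrec : ∀ n, u (n + 1) ≤ A + ρ * u n) :
    Tendsto (fun n => u n / 2 ^ n) atTop (𝓝 0) := by
  obtain ⟨σ, hρσ, hσ1, hσ2⟩ : ∃ σ, ρ ≤ σ ∧ 1 < σ ∧ σ < 2 :=
    ⟨(max ρ 1 + 2) / 2, by linarith [le_max_left ρ 1], by linarith [le_max_right ρ 1],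
      by linarith [max_lt hρ one_lt_two]⟩
  set D := A / (σ - 1)
  have hD : (σ - 1) * D = A := mul_div_cancel₀ _ (by linarith)
  have hD0 : 0 ≤ D := div_nonneg hA (by linarith)
  have hgeom : ∀ n, u n + D ≤ σ ^ n * (u 0 + D) := fun n =>
    le_geom (u := fun n => u n + D) (by linarith) n fun k _ => by
      nlinarith [hrec k, hu k]
  have hlim : Tendsto (fun n : ℕ => (u 0 + D) * (σ / 2) ^ n) atTop (𝓝 0) := by
    simpa using (tendsto_pow_atTop_nhds_zero_of_lt_one (by positivity)
      (by linarith : σ / 2 < 1)).const_mul (u 0 + D)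
  refine squeeze_zero (fun n => by have := hu n; positivity) (fun n => ?_) hlim
  rw [div_pow, mul_div_assoc', le_div_iff₀ (by positivity), div_mul_cancel₀ _ (by positivity)]
  linarith [hgeom n]

section Growth

variable {f : ℝ → ℝ} {a : ℝ}

lemma intervalIntegrable_of_forall_integrableOn_Ioc {u v : ℝ}
    (hf : ∀ b, IntegrableOn f (Ioc a b)) (hu : a ≤ u) (hv : a ≤ v) :
    IntervalIntegrable f volume u v :=
  intervalIntegrable_iff.2 <| (hf (max u v)).mono_set <| Ioc_subset_Ioc_left (le_min hu hv)

lemma integral_two_mul_le {q X : ℝ} (hf : ∀ b, IntegrableOn f (Ioc X b)) (hX : 0 ≤ X)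
    (hdouble : ∀ t, X ≤ t → f (2 * t) ≤ q * f t) {x : ℝ} (hx : X ≤ x) :
    ∫ t in X..2 * x, f t ≤ (∫ t in X..2 * X, f t) + 2 * q * ∫ t in X..x, f t := by
  have hint : ∀ {u v}, X ≤ u → X ≤ v → IntervalIntegrable f volume u v :=
    intervalIntegrable_of_forall_integrableOn_Ioc hf
  have hcomp : IntervalIntegrable (fun t => f (2 * t)) volume X x := by
    simpa using (hint (u := 2 * X) (v := 2 * x) (by linarith) (by linarith)).comp_mul_left (c := 2)
  have hscale : ∫ t in 2 * X..2 * x, f t = 2 * ∫ t in X..x, f (2 * t) := by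
    simp [intervalIntegral.integral_comp_mul_left]
  have hmono : ∫ t in X..x, f (2 * t) ≤ ∫ t in X..x, q * f t :=
    intervalIntegral.integral_mono_on hx hcomp ((hint le_rfl hx).const_mul q)
      fun t ht => hdouble t ht.1
  rw [intervalIntegral.integral_const_mul] at hmono
  rw [← intervalIntegral.integral_add_adjacent_intervals (hint (v := 2 * X) le_rfl (by linarith))
    (hint (u := 2 * X) (v := 2 * x) (by linarith) (by linarith)), hscale]
  linarith

lemma isBoundedUnder_mul_sub_integral_of_eventually_le (hf : ∀ b, IntegrableOn f (Ioc a b))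
    {c : ℝ} (hc : ∀ᶠ t in atTop, c ≤ f t) :
    IsBoundedUnder (· ≤ ·) atTop fun x => c * x - ∫ t in a..x, f t := by
  obtain ⟨X, hX⟩ := eventually_atTop.1 (hc.and (eventually_ge_atTop a))
  have haX : a ≤ X := (hX X le_rfl).2
  have hint : ∀ {u v}, a ≤ u → a ≤ v → IntervalIntegrable f volume u v :=
    intervalIntegrable_of_forall_integrableOn_Ioc hf
  refine ⟨c * X - ∫ t in a..X, f t, eventually_map.2 ?_⟩
  filter_upwards [eventually_ge_atTop X] with x hx
  have hmono : ∫ _ in X..x, c ≤ ∫ t in X..x, f t :=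
    intervalIntegral.integral_mono_on hx intervalIntegrable_const (hint haX (haX.trans hx))
      fun t ht => (hX t ht.1).1
  rw [intervalIntegral.integral_const, smul_eq_mul] at hmono
  rw [← intervalIntegral.integral_add_adjacent_intervals (hint le_rfl haX)
    (hint haX (haX.trans hx))]
  nlinarith

lemma not_isBoundedUnder_mul_sub_integral (hf : ∀ b, IntegrableOn f (Ioc a b)) {q c : ℝ}
    (hq : q < 1) (hf0 : ∀ᶠ t in atTop, 0 ≤ f t) (hdouble : ∀ᶠ t in atTop, f (2 * t) ≤ q * f t)
    (hc : 0 < c) :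
    ¬ IsBoundedUnder (· ≤ ·) atTop fun x => c * x - ∫ t in a..x, f t := by
  obtain ⟨X, hX⟩ := eventually_atTop.1 ((hf0.and hdouble).and (eventually_ge_atTop (max a 1)))
  have haX : a ≤ X := (le_max_left a 1).trans (hX X le_rfl).2
  have hX1 : 1 ≤ X := (le_max_right a 1).trans (hX X le_rfl).2
  have hpow : ∀ n : ℕ, X ≤ 2 ^ n * X := fun n =>
    le_mul_of_one_le_left (by linarith) (one_le_pow₀ one_le_two)
  set J : ℕ → ℝ := fun n => ∫ t in X..2 ^ n * X, f t
  have hJ0 : ∀ n, 0 ≤ J n := fun n =>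
    intervalIntegral.integral_nonneg (hpow n) fun t ht => (hX t (ht.1)).1.1
  have hJrec : ∀ n, J (n + 1) ≤ J 1 + 2 * q * J n := fun n => by
    have h := integral_two_mul_le (fun b => (hf b).mono_set (Ioc_subset_Ioc_left haX))
      (by linarith) (fun t ht => (hX t ht).1.2) (hpow n)
    simpa only [J, pow_succ, pow_zero, one_mul, mul_comm _ (2 : ℝ), mul_assoc] using h
  have hJlim := tendsto_div_two_pow_of_le_add_mul hJ0 (hJ0 1) (by linarith) hJrec
  rintro ⟨K, hK⟩
  have hpow_top : Tendsto (fun n : ℕ => (2 : ℝ) ^ n) atTop atTop :=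
    tendsto_pow_atTop_atTop_of_one_lt one_lt_two
  have hbound : ∀ᶠ n : ℕ in atTop, c * X ≤ (K + ∫ t in a..X, f t) / 2 ^ n + J n / 2 ^ n := by
    filter_upwards [(hpow_top.atTop_mul_const (by linarith)).eventually (eventually_map.1 hK)]
      with n hn
    rw [← intervalIntegral.integral_add_adjacent_intervals
      (intervalIntegrable_of_forall_integrableOn_Ioc hf le_rfl haX)
      (intervalIntegrable_of_forall_integrableOn_Ioc hf haX (haX.trans (hpow n)))] at hn
    rw [← add_div, le_div_iff₀ (by positivity)]
    linarith
  have hlim :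
      Tendsto (fun n : ℕ => (K + ∫ t in a..X, f t) / 2 ^ n + J n / 2 ^ n) atTop (𝓝 0) := by
    simpa using (tendsto_const_nhds.div_atTop hpow_top).add hJlim
  have := ge_of_tendsto hlim hbound
  nlinarith

end Growth

lemma SlowlyVarying.eventually_two_mul_mul_rpow_le {ℓ : ℝ → ℝ} (hℓ : SlowlyVarying ℓ)
    (hpos : ∀ᶠ t in atTop, 0 < ℓ t) {β : ℝ} (hβ : 0 < β) :
    ∀ᶠ t in atTop, ℓ (2 * t) * (2 * t) ^ (-β) ≤ 2 ^ (-β / 2) * (ℓ t * t ^ (-β)) := by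
  have hr : 1 < (2 : ℝ) ^ (β / 2) := one_lt_rpow one_lt_two (by positivity)
  filter_upwards [(hℓ 2 two_pos).eventually_lt_const hr, hpos, eventually_gt_atTop 0]
    with t hratio hℓt ht
  rw [div_lt_iff₀ hℓt] at hratio
  have h2 : (2 : ℝ) ^ (-β / 2) = 2 ^ (-β) * 2 ^ (β / 2) := by
    rw [← rpow_add two_pos]; ring_nf
  rw [mul_rpow zero_le_two ht.le, h2]
  calc ℓ (2 * t) * (2 ^ (-β) * t ^ (-β))
      ≤ 2 ^ (β / 2) * ℓ t * (2 ^ (-β) * t ^ (-β)) := by gcongr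
    _ = _ := by ring

lemma exists_pos_eventually_le_mul_rpow {ℓ : ℝ → ℝ} {γ : EReal} (hγ : 0 < γ)
    (hℓ : Tendsto (fun t => (ℓ t : EReal)) atTop (𝓝 γ)) {β : ℝ} (hβ : β ≤ 0) :
    ∃ b, 0 < b ∧ ∀ᶠ t in atTop, b ≤ ℓ t * t ^ (-β) := by
  obtain ⟨b, hb0, hbγ⟩ := EReal.exists_between_coe_real hγ
  refine ⟨b, by exact_mod_cast hb0, ?_⟩
  filter_upwards [hℓ.eventually_const_lt hbγ, eventually_ge_atTop 1] with t hbt ht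
  have hbt : b < ℓ t := by exact_mod_cast hbt
  have hb0 : (0 : ℝ) < b := by exact_mod_cast hb0
  calc b ≤ ℓ t := hbt.le
    _ ≤ ℓ t * t ^ (-β) := le_mul_of_one_le_right (by linarith) (one_le_rpow ht (by linarith))

theorem classL_lightTailed_iff_general
    (β : ℝ) (γ : EReal) (hγ : 0 < γ)
    (μ : Measure ℝ) [IsProbabilityMeasure μ]
    (F : ℝ → ℝ) (hFdef : ∀ x, F x = (μ (Set.Iic x)).toReal)
    (hF : MemClassL β γ F) :
    (∃ lam : ℝ, 0 < lam ∧
        ∫⁻ x, ENNReal.ofReal (Real.exp (lam * x)) ∂μ < ⊤) ↔ β ≤ 0 := by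
  obtain ⟨x₀, C, ℓ, -, hC, -, hpos, hsv, hℓγ, htend⟩ := hF
  have htail : ∀ x, 1 - cdf μ x = μ.real (Ioi x) := fun x => by
    rw [← compl_Iic, probReal_compl_eq_one_sub measurableSet_Iic, cdf_eq_real]
  have hF_cdf : F = cdf μ := funext fun x => by rw [hFdef, cdf_eq_real]; rfl
  simp only [hF_cdf, htail] at htend
  have hint := integrableOn_Ioc_of_tendsto_mul_exp_integral
    (by simpa [htail] using (tendsto_cdf_atTop μ).const_sub 1) hC.ne' htend
  rw [exists_lintegral_exp_lt_top_iff]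
  simp_rw [(isTheta_exp_neg_of_tendsto_mul_exp hC.ne' htend).isBigO_congr_left,
    isBigO_exp_neg_iff_isBoundedUnder]
  constructor
  · rintro ⟨c, hc, hbdd⟩
    by_contra! hβ
    have hf0 : ∀ᶠ t in atTop, 0 ≤ ℓ t * t ^ (-β) := by
      filter_upwards [hpos, eventually_ge_atTop 0] with t hℓt ht
      exact mul_nonneg hℓt.le (rpow_nonneg ht _)
    exact not_isBoundedUnder_mul_sub_integral hint (rpow_lt_one_of_one_lt_of_neg one_lt_two
      (by linarith)) hf0 (hsv.eventually_two_mul_mul_rpow_le hpos hβ) hc hbdd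
  · intro hβ
    obtain ⟨b, hb, hle⟩ := exists_pos_eventually_le_mul_rpow hγ hℓγ hβ
    exact ⟨b, hb, isBoundedUnder_mul_sub_integral_of_eventually_le hint hle⟩

/-- Let `μ` be the law of a nonnegative random variable, with
distribution function `F x = μ (Iic x)` satisfying `F x < 1` for all `x`, and suppose
`F ∈ L_{β,γ}` (with `β ≤ 1`, `γ ∈ (0,∞]`). Then `F` is light-tailed, i.e. there is
`λ > 0` with `∫ e^{λ x} dμ(x) < ∞`, if and only if `β ≤ 0`. -/
theorem classL_lightTailed_iff
    (β : ℝ) (γ : EReal) (hβ1 : β ≤ 1) (hγ : 0 < γ)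
    (μ : Measure ℝ) [IsProbabilityMeasure μ] (hsupp : μ (Set.Iio 0) = 0)
    (F : ℝ → ℝ) (hFdef : ∀ x, F x = (μ (Set.Iic x)).toReal)
    (hlt : ∀ x, F x < 1)
    (hF : MemClassL β γ F) :
    (∃ lam : ℝ, 0 < lam ∧
        ∫⁻ x, ENNReal.ofReal (Real.exp (lam * x)) ∂μ < ⊤) ↔ β ≤ 0 :=
  classL_lightTailed_iff_general β γ hγ μ F hFdef hF
end

section
/- Let F be a distribution function in the class L_{β,γ}. Then F is regularly varying (i.e. F̄(λx)/F̄(x) converges to a positive finite limit λ^{−δ} for every λ > 0, for some δ ≥ 0) if and only if β = 1 and γ < ∞; and in that case F ∈ RV_{−γ}, i.e. F̄(λx)/F̄(x) → λ^{−γ} as x → +∞ for every λ > 0. -/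
open Filter MeasureTheory Real Topology

/-- The tail of `F` is regularly varying with index `-δ`: `F̄(λx)/F̄(x) → λ^{-δ}`. -/
def RegVarying (δ : ℝ) (F : ℝ → ℝ) : Prop :=
  ∀ lam : ℝ, 0 < lam →
    Tendsto (fun x => (1 - F (lam * x)) / (1 - F x)) atTop (nhds (lam ^ (-δ)))

/-!
With `J(x) = ∫_{x₀}^x ℓ(t) t^{-β} dt`, membership in `L_{β,γ}` says `F̄(x) ~ C e^{-J(x)}`, hence
`F̄(λx)/F̄(x) ~ exp(-∫_x^{λx} ℓ(t) t^{-β} dt)`. If `β = 1` and `γ < ∞` the integrand is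
`ℓ(t)/t` with `ℓ → γ`, so the integral tends to `γ log λ` and the ratio to `λ^{-γ}`. Otherwise
`t · ℓ(t) t^{-β} → ∞`, so `∫_x^{2x}` diverges and `F̄(2x)/F̄(x) → 0`, which no power `2^{-δ}` equals.
-/

theorem integral_const_mul_inv_of_pos (c : ℝ) {x lam : ℝ} (hx : 0 < x) (hlam : 0 < lam) :
    ∫ t in x..lam * x, c * t⁻¹ = c * log lam := by
  rw [intervalIntegral.integral_const_mul, integral_inv_of_pos hx (by positivity),
    mul_div_cancel_right₀ _ hx.ne']

theorem intervalIntegrable_const_mul_inv_of_pos (c : ℝ) {a b : ℝ} (ha : 0 < a) (hb : 0 < b) :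
    IntervalIntegrable (fun t => c * t⁻¹) volume a b := by
  refine (intervalIntegral.intervalIntegrable_inv (fun t ht => ?_) continuousOn_id).const_mul c
  rcases Set.mem_uIcc.mp ht with h | h <;> exact (lt_of_lt_of_le (by positivity) h.1).ne'

section Normalization

variable {f Fb : ℝ → ℝ} {x₀ C : ℝ}

/-- Were `f` not integrable on `[x₀, x]`, the interval integrals would take the junk value `0`
from `x` on, forcing `Fb → C ≠ 0`. -/
theorem intervalIntegrable_of_tendsto_mul_exp_integral (hC : C ≠ 0)
    (hFb : Tendsto Fb atTop (𝓝 0))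
    (h : Tendsto (fun x => Fb x * exp (∫ t in x₀..x, f t)) atTop (𝓝 C))
    {x : ℝ} (hx : x₀ ≤ x) : IntervalIntegrable f volume x₀ x := by
  by_contra hni
  have hzero : ∀ᶠ y in atTop, Fb y * exp (∫ t in x₀..y, f t) = Fb y := by
    filter_upwards [eventually_ge_atTop x] with y hy
    have hni' : ¬IntervalIntegrable f volume x₀ y := fun hy' => hni <| hy'.mono_set <|
      Set.uIcc_subset_uIcc Set.left_mem_uIcc (Set.mem_uIcc.mpr (Or.inl ⟨hx, hy⟩))
    rw [intervalIntegral.integral_undef hni', exp_zero, mul_one]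
  exact hC (tendsto_nhds_unique (h.congr' hzero) hFb)

theorem tendsto_div_mul_exp_integral (hC : C ≠ 0) (hFb : Tendsto Fb atTop (𝓝 0))
    (h : Tendsto (fun x => Fb x * exp (∫ t in x₀..x, f t)) atTop (𝓝 C))
    {lam : ℝ} (hlam : 0 < lam) :
    Tendsto (fun x => Fb (lam * x) / Fb x * exp (∫ t in x..lam * x, f t)) atTop (𝓝 1) := by
  have hlamx : Tendsto (fun x => lam * x) atTop atTop := tendsto_id.const_mul_atTop hlam
  have hquot := (h.comp hlamx).div h hC
  rw [div_self hC] at hquot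
  refine hquot.congr' ?_
  filter_upwards [eventually_ge_atTop x₀, hlamx.eventually_ge_atTop x₀] with x hx hlx
  rw [← intervalIntegral.integral_interval_sub_left
    (intervalIntegrable_of_tendsto_mul_exp_integral hC hFb h hlx)
    (intervalIntegrable_of_tendsto_mul_exp_integral hC hFb h hx), exp_sub]
  simp only [Pi.div_apply, Function.comp_apply]
  field_simp

end Normalization

theorem tendsto_of_mul_exp_tendsto_one {α : Type*} {l : Filter α} {g a : α → ℝ} {L : ℝ}
    (h : Tendsto (fun x => g x * exp (a x)) l (𝓝 1)) (ha : Tendsto a l (𝓝 L)) :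
    Tendsto g l (𝓝 (exp (-L))) := by
  have := h.mul ((continuous_exp.tendsto _).comp ha.neg)
  rw [one_mul] at this
  refine this.congr fun x => ?_
  simp [mul_assoc, ← exp_add]

theorem tendsto_zero_of_mul_exp_tendsto_one {α : Type*} {l : Filter α} {g a : α → ℝ}
    (h : Tendsto (fun x => g x * exp (a x)) l (𝓝 1)) (ha : Tendsto a l atTop) :
    Tendsto g l (𝓝 0) := by
  have := h.mul (tendsto_exp_atBot.comp (tendsto_neg_atTop_atBot.comp ha))
  rw [one_mul] at this
  refine this.congr fun x => ?_
  simp [mul_assoc, ← exp_add]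


theorem tendsto_integral_mul_inv {g : ℝ → ℝ} {c x₀ : ℝ} (hg : Tendsto g atTop (𝓝 c))
    (hint : ∀ x, x₀ ≤ x → IntervalIntegrable (fun t => g t * t⁻¹) volume x₀ x)
    {lam : ℝ} (hlam : 0 < lam) :
    Tendsto (fun x => ∫ t in x..lam * x, g t * t⁻¹) atTop (𝓝 (c * log lam)) := by
  have hlamx : Tendsto (fun x => lam * x) atTop atTop := tendsto_id.const_mul_atTop hlam
  rw [Metric.tendsto_nhds]
  intro ε hε
  set ε' := ε / (|log lam| + 1)
  have hε' : 0 < ε' := by positivity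
  have hclose : ∀ᶠ x in atTop, ∀ t, x ≤ t → |g t - c| < ε' := eventually_forall_ge_atTop.mpr <|
    (Metric.tendsto_nhds.mp hg ε' hε').mono fun t ht => by rwa [Real.dist_eq] at ht
  filter_upwards [hclose, hlamx.eventually hclose, eventually_ge_atTop x₀,
    hlamx.eventually_ge_atTop x₀, eventually_gt_atTop 0] with x hx hlx hx₀ hlx₀ hxpos
  have hlxpos : 0 < lam * x := by positivity
  have hsub : (∫ t in x..lam * x, g t * t⁻¹) - c * log lam
      = ∫ t in x..lam * x, (g t - c) * t⁻¹ := by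
    rw [← integral_const_mul_inv_of_pos c hxpos hlam, ← intervalIntegral.integral_sub
      ((hint x hx₀).symm.trans (hint _ hlx₀))
      (intervalIntegrable_const_mul_inv_of_pos c hxpos hlxpos)]
    simp only [sub_mul]
  have hbound : ∀ t ∈ Set.uIoc x (lam * x), ‖(g t - c) * t⁻¹‖ ≤ ε' * t⁻¹ := by
    intro t ht
    have ht' := Set.mem_uIoc.mp ht
    have htpos : 0 < t := by rcases ht' with h | h <;> linarith [h.1]
    have hgt : |g t - c| < ε' := by
      rcases ht' with h | h
      · exact hx t h.1.le
      · exact hlx t h.1.le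
    rw [norm_mul, norm_inv, Real.norm_eq_abs, Real.norm_of_nonneg htpos.le]
    gcongr
  calc dist (∫ t in x..lam * x, g t * t⁻¹) (c * log lam)
      = ‖∫ t in x..lam * x, (g t - c) * t⁻¹‖ := by rw [Real.dist_eq, hsub, Real.norm_eq_abs]
    _ ≤ |∫ t in x..lam * x, ε' * t⁻¹| :=
      intervalIntegral.norm_integral_le_abs_of_norm_le
        ((ae_restrict_iff' measurableSet_uIoc).mpr (ae_of_all _ hbound))
        (intervalIntegrable_const_mul_inv_of_pos ε' hxpos hlxpos)
    _ = ε' * |log lam| := by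
      rw [integral_const_mul_inv_of_pos ε' hxpos hlam, abs_mul, abs_of_pos hε']
    _ < ε := by
      rw [div_mul_eq_mul_div, div_lt_iff₀ (by positivity)]
      nlinarith

theorem tendsto_integral_atTop_of_tendsto_mul_atTop {f : ℝ → ℝ} {x₀ : ℝ}
    (hint : ∀ x, x₀ ≤ x → IntervalIntegrable f volume x₀ x)
    (hf : Tendsto (fun t => t * f t) atTop atTop) {lam : ℝ} (hlam : 1 < lam) :
    Tendsto (fun x => ∫ t in x..lam * x, f t) atTop atTop := by
  have hloglam : 0 < log lam := log_pos hlam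
  rw [tendsto_atTop]
  intro b
  have hlarge : ∀ᶠ x in atTop, ∀ t, x ≤ t → b / log lam ≤ t * f t :=
    eventually_forall_ge_atTop.mpr (hf.eventually_ge_atTop _)
  filter_upwards [hlarge, eventually_ge_atTop x₀, eventually_gt_atTop 0] with x hx hx₀ hxpos
  have hxlx : x ≤ lam * x := le_mul_of_one_le_left hxpos.le hlam.le
  calc b = ∫ t in x..lam * x, b / log lam * t⁻¹ := by
        rw [integral_const_mul_inv_of_pos _ hxpos (by positivity), div_mul_cancel₀ _ hloglam.ne']
    _ ≤ ∫ t in x..lam * x, f t := by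
      refine intervalIntegral.integral_mono_on hxlx
        (intervalIntegrable_const_mul_inv_of_pos _ hxpos (by positivity))
        ((hint x hx₀).symm.trans (hint _ (hx₀.trans hxlx))) fun t ht => ?_
      have htpos : 0 < t := hxpos.trans_le ht.1
      rw [← div_eq_mul_inv, div_le_iff₀ htpos, mul_comm]
      exact hx t ht.1

theorem tendsto_toReal_of_tendsto_coe {α : Type*} {l : Filter α} {g : α → ℝ} {γ : EReal}
    (hg : Tendsto (fun t => (g t : EReal)) l (𝓝 γ)) (hbot : γ ≠ ⊥) (htop : γ ≠ ⊤) :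
    Tendsto g l (𝓝 γ.toReal) := by
  rwa [← EReal.tendsto_coe, EReal.coe_toReal htop hbot]

theorem tendsto_mul_mul_rpow_neg_atTop {ℓ : ℝ → ℝ} {β : ℝ} {γ : EReal} (hβ : β ≤ 1)
    (hγ : 0 < γ) (hℓ : Tendsto (fun t => (ℓ t : EReal)) atTop (𝓝 γ))
    (hne : ¬(β = 1 ∧ γ < ⊤)) :
    Tendsto (fun t => t * (ℓ t * t ^ (-β))) atTop atTop := by
  have hrw : ∀ᶠ t : ℝ in atTop, ℓ t * t ^ (1 - β) = t * (ℓ t * t ^ (-β)) := by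
    filter_upwards [eventually_gt_atTop 0] with t ht
    rw [sub_eq_add_neg, rpow_add ht, rpow_one]
    ring
  refine Tendsto.congr' hrw ?_
  rcases (le_top : γ ≤ ⊤).eq_or_lt with rfl | hγtop
  · have hℓtop : Tendsto ℓ atTop atTop := tendsto_atTop.mpr fun b =>
      (EReal.tendsto_nhds_top_iff_real.mp hℓ b).mono fun t ht => by exact_mod_cast ht.le
    refine tendsto_atTop_mono' atTop ?_ hℓtop
    filter_upwards [hℓtop.eventually_ge_atTop 0, eventually_ge_atTop 1] with t hℓt ht
    exact le_mul_of_one_le_right hℓt (one_le_rpow ht (by linarith))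
  · have hβlt : β < 1 := hβ.lt_of_ne fun h => hne ⟨h, hγtop⟩
    exact (tendsto_toReal_of_tendsto_coe hℓ hγ.ne_bot hγtop.ne).pos_mul_atTop
      (EReal.toReal_pos hγ hγtop.ne) (tendsto_rpow_atTop (by linarith))

theorem classL_regularlyVarying_iff_general
    (β : ℝ) (γ : EReal) (hβ1 : β ≤ 1) (hγ : 0 < γ)
    (F : ℝ → ℝ) (hlim : Tendsto F atTop (nhds 1))
    (hF : MemClassL β γ F) :
    ((∃ δ : ℝ, 0 ≤ δ ∧ RegVarying δ F) ↔ (β = 1 ∧ γ < ⊤)) ∧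
    (β = 1 → γ < ⊤ → RegVarying γ.toReal F) := by
  obtain ⟨x₀, C, ℓ, -, hC, -, -, -, hℓ, htend⟩ := hF
  have hFb : Tendsto (fun x => 1 - F x) atTop (𝓝 0) := by
    simpa using (tendsto_const_nhds (x := (1 : ℝ))).sub hlim
  have hint := fun x => intervalIntegrable_of_tendsto_mul_exp_integral hC.ne' hFb htend (x := x)
  have hratio := fun lam (hlam : 0 < lam) => tendsto_div_mul_exp_integral hC.ne' hFb htend hlam
  have regVarying : β = 1 → γ < ⊤ → RegVarying γ.toReal F := by
    rintro rfl hγtop lam hlam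
    simp only [rpow_neg_one] at hint hratio
    have hexp := tendsto_of_mul_exp_tendsto_one (hratio lam hlam)
      (tendsto_integral_mul_inv (tendsto_toReal_of_tendsto_coe hℓ hγ.ne_bot hγtop.ne) hint hlam)
    rwa [rpow_def_of_pos hlam, mul_comm, neg_mul]
  have ratio_two : ¬(β = 1 ∧ γ < ⊤) →
      Tendsto (fun x => (1 - F (2 * x)) / (1 - F x)) atTop (𝓝 0) := fun hne =>
    tendsto_zero_of_mul_exp_tendsto_one (hratio 2 two_pos)
      (tendsto_integral_atTop_of_tendsto_mul_atTop hint
        (tendsto_mul_mul_rpow_neg_atTop hβ1 hγ hℓ hne) one_lt_two)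
  refine ⟨⟨fun ⟨δ, _, hδ⟩ => ?_, fun ⟨hβ, hγtop⟩ =>
    ⟨γ.toReal, EReal.toReal_nonneg hγ.le, regVarying hβ hγtop⟩⟩, regVarying⟩
  by_contra hne
  exact (rpow_pos_of_pos two_pos (-δ)).ne' (tendsto_nhds_unique (hδ 2 two_pos) (ratio_two hne))

/-- Let `F ∈ L_{β,γ}` (distribution function on `[0,∞)`, `F x < 1`,
`β ≤ 1`, `γ ∈ (0,∞]`).  Then `F` is regularly varying (with some index `-δ ≤ 0`)
if and only if `β = 1` and `γ < ∞`; and in that case `F ∈ RV_{-γ}`. -/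
theorem classL_regularlyVarying_iff
    (β : ℝ) (γ : EReal) (hβ1 : β ≤ 1) (hγ : 0 < γ)
    (F : ℝ → ℝ) (hmono : Monotone F) (hneg : ∀ x < 0, F x = 0)
    (hlt : ∀ x, F x < 1) (hlim : Tendsto F atTop (nhds 1))
    (hF : MemClassL β γ F) :
    ((∃ δ : ℝ, 0 ≤ δ ∧ RegVarying δ F) ↔ (β = 1 ∧ γ < ⊤)) ∧
    (β = 1 → γ < ⊤ → RegVarying γ.toReal F) :=
  classL_regularlyVarying_iff_general β γ hβ1 hγ F hlim hF
end

section
/- Let u_1, …, u_N (N ≥ 2) be distinct unit vectors in ℝ^n, n ≥ 2, and set ρ_{ij} = ⟨u_i, u_j⟩ and ρ_* = max_{i≠j} ρ_{ij}. For x = u_i and a unit vector v orthogonal to u_i, define the local critical radius θ(u_i, v) ∈ (0, π) by cot θ(u_i, v) = max_{j≠i} ⟨u_j, v⟩/(1 − ⟨u_i, u_j⟩), and let θ_* = min_{1≤i≤N} min_{v ⊥ u_i, ‖v‖=1} θ(u_i, v) be the critical radius of the finite set M = {u_1, …, u_N}. Then cos θ_* = √((1+ρ_*)/2); equivalently, for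 ρ_* > −1, tan θ_* = √((1−ρ_*)/(1+ρ_*)). -/
open Filter Real Topology
open scoped RealInnerProductSpace

private lemma aux_cot_eq_tan (θ : ℝ) :
    Real.cos θ / Real.sin θ = Real.tan (π/2 - θ) := by
  rw [Real.tan_eq_sin_div_cos, Real.sin_pi_div_two_sub, Real.cos_pi_div_two_sub]

private lemma aux_cot_le_cot {a b : ℝ} (ha : a ∈ Set.Ioo 0 π) (hb : b ∈ Set.Ioo 0 π)
    (h : Real.cos b / Real.sin b ≤ Real.cos a / Real.sin a) : a ≤ b := by
  by_contra hc
  push_neg at hc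
  have ha' : π/2 - a ∈ Set.Ioo (-(π/2)) (π/2) :=
    ⟨by have := ha.2; linarith, by have := ha.1; linarith⟩
  have hb' : π/2 - b ∈ Set.Ioo (-(π/2)) (π/2) :=
    ⟨by have := hb.2; linarith, by have := hb.1; linarith⟩
  have := Real.strictMonoOn_tan ha' hb' (by linarith)
  rw [← aux_cot_eq_tan, ← aux_cot_eq_tan] at this
  linarith

private lemma exists_unit_orth {n : ℕ} (hn : 2 ≤ n) (x : EuclideanSpace ℝ (Fin n))
    (hx : ‖x‖ = 1) : ∃ v : EuclideanSpace ℝ (Fin n), ⟪x, v⟫ = 0 ∧ ‖v‖ = 1 := by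
  have hx0 : x ≠ 0 := by intro h; rw [h, norm_zero] at hx; norm_num at hx
  have hrank : Module.finrank ℝ (EuclideanSpace ℝ (Fin n)) = n := finrank_euclideanSpace_fin
  have hspan : Module.finrank ℝ ↥(Submodule.span ℝ {x}) = 1 := finrank_span_singleton hx0
  have hperp : 0 < Module.finrank ℝ ↥(Submodule.span ℝ {x})ᗮ := by
    have := Submodule.finrank_add_finrank_orthogonal (K := Submodule.span ℝ {x})
    omega
  have hnb : (Submodule.span ℝ {x})ᗮ ≠ ⊥ := by
    intro h
    rw [h, finrank_bot] at hperp
    omega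
  obtain ⟨y, hy, hy0⟩ := (Submodule.ne_bot_iff _).mp hnb
  refine ⟨(‖y‖ : ℝ)⁻¹ • y, ?_, norm_smul_inv_norm hy0⟩
  rw [real_inner_smul_right]
  have : ⟪x, y⟫ = 0 := hy x (Submodule.mem_span_singleton_self x)
  rw [this, mul_zero]
/-- Let `u₁,…,u_N` (`N ≥ 2`) be distinct unit vectors in `ℝⁿ`,
`ρ_{ij} = ⟪u_i,u_j⟫` and `ρ_* = max_{i≠j} ρ_{ij}`. For each `i` and each unit vector
`v ⊥ u_i`, let `θ(u_i,v) ∈ (0,π)` be defined by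
`cot θ(u_i,v) = max_{j≠i} ⟪u_j,v⟫/(1-⟪u_i,u_j⟫)`, and let
`θ_* = min_i min_v θ(u_i,v)` be the critical radius of `{u₁,…,u_N}`.
Then `cos θ_* = √((1+ρ_*)/2)`, and if `ρ_* > -1`, `tan θ_* = √((1-ρ_*)/(1+ρ_*))`. -/
theorem critical_radius_finite_set
    (n N : ℕ) (hn : 2 ≤ n) (hN : 2 ≤ N)
    (u : Fin N → EuclideanSpace ℝ (Fin n))
    (hunit : ∀ i, ‖u i‖ = 1) (hinj : Function.Injective u)
    (θloc : Fin N → EuclideanSpace ℝ (Fin n) → ℝ)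
    (hθloc : ∀ (i : Fin N) (v : EuclideanSpace ℝ (Fin n)),
      ⟪u i, v⟫ = 0 → ‖v‖ = 1 →
        θloc i v ∈ Set.Ioo 0 π ∧
        Real.cos (θloc i v) / Real.sin (θloc i v) =
          sSup {x : ℝ | ∃ j : Fin N, j ≠ i ∧ x = ⟪u j, v⟫ / (1 - ⟪u i, u j⟫)})
    (ρstar : ℝ)
    (hρstar : ρstar = sSup {x : ℝ | ∃ i j : Fin N, i ≠ j ∧ x = ⟪u i, u j⟫})
    (θstar : ℝ)
    (hθstar : θstar = sInf {θ : ℝ | ∃ (i : Fin N) (v : EuclideanSpace ℝ (Fin n)),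
      ⟪u i, v⟫ = 0 ∧ ‖v‖ = 1 ∧ θ = θloc i v}) :
    Real.cos θstar = Real.sqrt ((1 + ρstar) / 2) ∧
    (-1 < ρstar → Real.tan θstar = Real.sqrt ((1 - ρstar) / (1 + ρstar))) := by
  have hNtriv : Nontrivial (Fin N) := Fin.nontrivial_iff_two_le.mpr hN
  -- basic bounds on inner products
  have hlt1 : ∀ i j : Fin N, i ≠ j → ⟪u i, u j⟫ < 1 := by
    intro i j hij
    have hne : u i - u j ≠ 0 := sub_ne_zero.mpr (fun h => hij (hinj h))
    have h2 : 0 < ‖u i - u j‖ ^ 2 := pow_pos (norm_pos_iff.mpr hne) 2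
    rw [norm_sub_sq_real, hunit i, hunit j] at h2
    nlinarith
  have hgem1 : ∀ i j : Fin N, -1 ≤ ⟪u i, u j⟫ := by
    intro i j
    have h2 : 0 ≤ ‖u i + u j‖ ^ 2 := sq_nonneg _
    rw [norm_add_sq_real, hunit i, hunit j] at h2
    nlinarith
  -- the pair set of inner products
  have hPfin : {x : ℝ | ∃ i j : Fin N, i ≠ j ∧ x = ⟪u i, u j⟫}.Finite := by
    apply Set.Finite.subset
      (Set.finite_range (fun p : Fin N × Fin N => (⟪u p.1, u p.2⟫ : ℝ)))
    rintro x ⟨i, j, _, rfl⟩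
    exact ⟨(i, j), rfl⟩
  have hPne : {x : ℝ | ∃ i j : Fin N, i ≠ j ∧ x = ⟪u i, u j⟫}.Nonempty := by
    obtain ⟨i, j, hij⟩ := exists_pair_ne (Fin N)
    exact ⟨_, i, j, hij, rfl⟩
  have hρmem : ρstar ∈ {x : ℝ | ∃ i j : Fin N, i ≠ j ∧ x = ⟪u i, u j⟫} :=
    hρstar ▸ hPne.csSup_mem hPfin
  have hρub : ∀ i j : Fin N, i ≠ j → ⟪u i, u j⟫ ≤ ρstar := by
    intro i j hij
    rw [hρstar]
    exact le_csSup hPfin.bddAbove ⟨i, j, hij, rfl⟩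
  obtain ⟨i₀, j₀, hij₀, hρeq⟩ := hρmem
  have hρlt1 : ρstar < 1 := hρeq ▸ hlt1 i₀ j₀ hij₀
  have hρge : -1 ≤ ρstar := hρeq ▸ hgem1 i₀ j₀
  have hsub_pos : (0:ℝ) < 1 - ρstar := by linarith
  set c : ℝ := Real.sqrt (1 + ρstar) / Real.sqrt (1 - ρstar) with hc
  have hc_nonneg : 0 ≤ c := div_nonneg (Real.sqrt_nonneg _) (Real.sqrt_nonneg _)
  -- ratio lemma
  have hratio : ∀ ρ : ℝ, -1 ≤ ρ → ρ < 1 →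
      Real.sqrt (1 - ρ^2) / (1 - ρ) = Real.sqrt (1 + ρ) / Real.sqrt (1 - ρ) := by
    intro ρ h1 h2
    have h3 : (0:ℝ) ≤ 1 - ρ := by linarith
    rw [div_eq_div_iff (by linarith) (ne_of_gt (Real.sqrt_pos.mpr (by linarith)))]
    rw [← Real.sqrt_mul (by nlinarith)]
    rw [show (1 - ρ^2) * (1-ρ) = (1+ρ) * ((1-ρ)*(1-ρ)) by ring,
      Real.sqrt_mul (by linarith), Real.sqrt_mul_self h3]
  -- key upper bound for each term in the sSup defining cot θloc
  have hterm : ∀ (i j : Fin N) (v : EuclideanSpace ℝ (Fin n)), j ≠ i →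
      ⟪u i, v⟫ = 0 → ‖v‖ = 1 → ⟪u j, v⟫ / (1 - ⟪u i, u j⟫) ≤ c := by
    intro i j v hji hv0 hv1
    set ρ : ℝ := ⟪u i, u j⟫ with hρ
    have h1 : ρ < 1 := hlt1 i j (Ne.symm hji)
    have h2 : -1 ≤ ρ := hgem1 i j
    have h3 : ρ ≤ ρstar := hρub i j (Ne.symm hji)
    have hcomm : (⟪u j, u i⟫ : ℝ) = ρ := by rw [hρ, real_inner_comm]
    have e3 : ‖u j - ρ • u i‖^2 = 1 - ρ^2 := by
      rw [norm_sub_sq_real, real_inner_smul_right, hcomm, norm_smul, hunit i, hunit j,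
        Real.norm_eq_abs, mul_pow, sq_abs]
      ring
    have e4 : ‖u j - ρ • u i‖ = Real.sqrt (1 - ρ^2) := by
      rw [← e3, Real.sqrt_sq (norm_nonneg _)]
    have hw : ⟪u j, v⟫ ≤ Real.sqrt (1 - ρ^2) := by
      calc ⟪u j, v⟫ = ⟪u j - ρ • u i, v⟫ := by
            rw [inner_sub_left, real_inner_smul_left, hv0]; ring
        _ ≤ ‖u j - ρ • u i‖ * ‖v‖ := real_inner_le_norm _ _
        _ = Real.sqrt (1 - ρ^2) := by rw [hv1, mul_one, e4]
    calc ⟪u j, v⟫ / (1 - ρ) ≤ Real.sqrt (1 - ρ^2) / (1 - ρ) := by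
          exact (div_le_div_iff_of_pos_right (by linarith)).mpr hw
      _ = Real.sqrt (1+ρ) / Real.sqrt (1-ρ) := hratio ρ h2 h1
      _ ≤ c := by
          rw [hc]
          exact div_le_div₀ (Real.sqrt_nonneg _) (Real.sqrt_le_sqrt (by linarith))
            (Real.sqrt_pos.mpr hsub_pos) (Real.sqrt_le_sqrt (by linarith))
  -- finiteness / nonemptiness of the term sets
  have hSfin : ∀ (i : Fin N) (v : EuclideanSpace ℝ (Fin n)),
      {x : ℝ | ∃ j : Fin N, j ≠ i ∧ x = ⟪u j, v⟫ / (1 - ⟪u i, u j⟫)}.Finite := by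
    intro i v
    apply Set.Finite.subset
      (Set.finite_range (fun j : Fin N => (⟪u j, v⟫ / (1 - ⟪u i, u j⟫) : ℝ)))
    rintro x ⟨j, _, rfl⟩
    exact ⟨j, rfl⟩
  have hSne : ∀ (i : Fin N) (v : EuclideanSpace ℝ (Fin n)),
      {x : ℝ | ∃ j : Fin N, j ≠ i ∧ x = ⟪u j, v⟫ / (1 - ⟪u i, u j⟫)}.Nonempty := by
    intro i v
    obtain ⟨j, hj⟩ := exists_ne i
    exact ⟨_, j, hj, rfl⟩
  -- the sSup of the terms is at most c
  have hg_le : ∀ (i : Fin N) (v : EuclideanSpace ℝ (Fin n)), ⟪u i, v⟫ = 0 → ‖v‖ = 1 →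
      sSup {x : ℝ | ∃ j : Fin N, j ≠ i ∧ x = ⟪u j, v⟫ / (1 - ⟪u i, u j⟫)} ≤ c := by
    intro i v hv0 hv1
    apply csSup_le (hSne i v)
    rintro x ⟨j, hj, rfl⟩
    exact hterm i j v hj hv0 hv1
  -- existence of a minimizing pair (i, v) whose sSup equals c
  have hexists : ∃ (i : Fin N) (v : EuclideanSpace ℝ (Fin n)),
      ⟪u i, v⟫ = 0 ∧ ‖v‖ = 1 ∧
      sSup {x : ℝ | ∃ j : Fin N, j ≠ i ∧ x = ⟪u j, v⟫ / (1 - ⟪u i, u j⟫)} = c := by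
    rcases lt_or_ge (-1 : ℝ) ρstar with hgt | hle
    · -- nondegenerate case ρ* > -1
      set w : EuclideanSpace ℝ (Fin n) := u j₀ - ρstar • u i₀ with hwdef
      have hinner_i : ⟪u i₀, w⟫ = 0 := by
        rw [hwdef, inner_sub_right, real_inner_smul_right, real_inner_self_eq_norm_sq,
          hunit i₀, ← hρeq]
        ring
      have h1ρ2 : (0:ℝ) < 1 - ρstar^2 := by nlinarith
      have hnormw : ‖w‖^2 = 1 - ρstar^2 := by
        have hcomm : (⟪u j₀, u i₀⟫ : ℝ) = ρstar := by rw [hρeq, real_inner_comm]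
        rw [hwdef, norm_sub_sq_real, real_inner_smul_right, hcomm, norm_smul, hunit i₀,
          hunit j₀, Real.norm_eq_abs, mul_pow, sq_abs]
        ring
      have hwne : w ≠ 0 := by
        intro h
        rw [h, norm_zero] at hnormw
        nlinarith
      set v : EuclideanSpace ℝ (Fin n) := (‖w‖ : ℝ)⁻¹ • w with hvdef
      have hv1 : ‖v‖ = 1 := norm_smul_inv_norm hwne
      have hv0 : ⟪u i₀, v⟫ = 0 := by rw [hvdef, real_inner_smul_right, hinner_i, mul_zero]
      have hnormw' : ‖w‖ = Real.sqrt (1 - ρstar^2) := by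
        rw [← hnormw, Real.sqrt_sq (norm_nonneg _)]
      have hinner_jw : ⟪u j₀, w⟫ = 1 - ρstar^2 := by
        have hcomm : (⟪u j₀, u i₀⟫ : ℝ) = ρstar := by rw [hρeq, real_inner_comm]
        rw [hwdef, inner_sub_right, real_inner_smul_right, real_inner_self_eq_norm_sq,
          hunit j₀, hcomm]
        ring
      have hinner_j : ⟪u j₀, v⟫ = Real.sqrt (1 - ρstar^2) := by
        rw [hvdef, real_inner_smul_right, hinner_jw, hnormw']
        rw [inv_mul_eq_div, div_eq_iff (ne_of_gt (Real.sqrt_pos.mpr h1ρ2))]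
        exact (Real.mul_self_sqrt h1ρ2.le).symm
      refine ⟨i₀, v, hv0, hv1, le_antisymm (hg_le i₀ v hv0 hv1) ?_⟩
      apply le_csSup (hSfin i₀ v).bddAbove
      refine ⟨j₀, Ne.symm hij₀, ?_⟩
      rw [hinner_j, ← hρeq, hratio ρstar hρge hρlt1, hc]
    · -- degenerate case ρ* = -1
      have hρm1 : ρstar = -1 := le_antisymm hle hρge
      have hcz : c = 0 := by rw [hc, hρm1]; norm_num
      obtain ⟨v, hv0, hv1⟩ := exists_unit_orth hn (u i₀) (hunit i₀)
      have hallm1 : ∀ j : Fin N, j ≠ i₀ → u j = -u i₀ := by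
        intro j hj
        have h1 : ⟪u i₀, u j⟫ ≤ -1 := hρm1 ▸ hρub i₀ j (Ne.symm hj)
        have h2 : ‖u i₀ + u j‖^2 = 0 := by
          rw [norm_add_sq_real, hunit i₀, hunit j]
          nlinarith [hgem1 i₀ j]
        have h3 : u i₀ + u j = 0 := by
          have := pow_eq_zero_iff (n := 2) (by norm_num) |>.mp h2
          exact norm_eq_zero.mp this
        exact eq_neg_of_add_eq_zero_right h3
      have hall0 : ∀ x ∈ {x : ℝ | ∃ j : Fin N, j ≠ i₀ ∧
          x = ⟪u j, v⟫ / (1 - ⟪u i₀, u j⟫)}, x = 0 := by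
        rintro x ⟨j, hj, rfl⟩
        rw [hallm1 j hj, inner_neg_left, hv0]
        norm_num
      refine ⟨i₀, v, hv0, hv1, ?_⟩
      rw [hcz]
      apply le_antisymm
      · exact csSup_le (hSne i₀ v) (fun x hx => le_of_eq (hall0 x hx))
      · obtain ⟨j, hj⟩ := exists_ne i₀
        apply le_csSup (hSfin i₀ v).bddAbove
        refine ⟨j, hj, ?_⟩
        rw [hallm1 j hj, inner_neg_left, hv0]
        norm_num
  -- identify θstar
  obtain ⟨i₁, v₁, hv0, hv1, hgc⟩ := hexists
  obtain ⟨hmem₁, hcot₁⟩ := hθloc i₁ v₁ hv0 hv1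
  have hcotθ₀ : Real.cos (θloc i₁ v₁) / Real.sin (θloc i₁ v₁) = c := by rw [hcot₁, hgc]
  have hlb : ∀ θ ∈ {θ : ℝ | ∃ (i : Fin N) (v : EuclideanSpace ℝ (Fin n)),
      ⟪u i, v⟫ = 0 ∧ ‖v‖ = 1 ∧ θ = θloc i v}, θloc i₁ v₁ ≤ θ := by
    rintro θ ⟨i, v, h0, h1, rfl⟩
    obtain ⟨hm, hc'⟩ := hθloc i v h0 h1
    exact aux_cot_le_cot hmem₁ hm (by rw [hc', hcotθ₀]; exact hg_le i v h0 h1)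
  have hθeq : θstar = θloc i₁ v₁ := by
    rw [hθstar]
    exact le_antisymm (csInf_le ⟨θloc i₁ v₁, hlb⟩ ⟨i₁, v₁, hv0, hv1, rfl⟩)
      (le_csInf ⟨θloc i₁ v₁, i₁, v₁, hv0, hv1, rfl⟩ hlb)
  rw [hθeq]
  -- trigonometric computation
  have hsinpos : 0 < Real.sin (θloc i₁ v₁) := Real.sin_pos_of_pos_of_lt_pi hmem₁.1 hmem₁.2
  have hcos : Real.cos (θloc i₁ v₁) = c * Real.sin (θloc i₁ v₁) := by
    rw [div_eq_iff (ne_of_gt hsinpos)] at hcotθ₀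
    exact hcotθ₀
  have hc2 : c^2 = (1+ρstar)/(1-ρstar) := by
    rw [hc, div_pow, Real.sq_sqrt (by linarith : (0:ℝ) ≤ 1 + ρstar),
      Real.sq_sqrt (by linarith : (0:ℝ) ≤ 1 - ρstar)]
  have hpyth : Real.sin (θloc i₁ v₁)^2 + Real.cos (θloc i₁ v₁)^2 = 1 :=
    Real.sin_sq_add_cos_sq _
  have hsin2 : Real.sin (θloc i₁ v₁)^2 = (1-ρstar)/2 := by
    set s := Real.sin (θloc i₁ v₁) with hs
    have h := hpyth
    rw [hcos] at h
    have h2 : s^2 * (1 + c^2) = 1 := by linear_combination h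
    rw [hc2] at h2
    have h4 : (1:ℝ) + (1+ρstar)/(1-ρstar) = 2/(1-ρstar) := by
      field_simp
      norm_num
    rw [h4] at h2
    have h5 : s^2 * 2 = 1 - ρstar := by
      field_simp at h2
      linarith
    linarith
  have hcos2 : Real.cos (θloc i₁ v₁)^2 = (1+ρstar)/2 := by linarith
  have hcosnn : 0 ≤ Real.cos (θloc i₁ v₁) := by
    rw [hcos]; exact mul_nonneg hc_nonneg hsinpos.le
  have hcosval : Real.cos (θloc i₁ v₁) = Real.sqrt ((1+ρstar)/2) := by
    rw [← hcos2, Real.sqrt_sq hcosnn]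
  refine ⟨hcosval, ?_⟩
  intro hρgt
  have hsinval : Real.sin (θloc i₁ v₁) = Real.sqrt ((1-ρstar)/2) := by
    rw [← hsin2, Real.sqrt_sq hsinpos.le]
  have hdd : ((1-ρstar)/2) / ((1+ρstar)/2) = (1-ρstar)/(1+ρstar) := by
    rw [div_div_div_comm]
    norm_num
  rw [Real.tan_eq_sin_div_cos, hsinval, hcosval,
    ← Real.sqrt_div (by linarith : (0:ℝ) ≤ (1-ρstar)/2), hdd]
end

section
/- Fix n ≥ 2, 1 ≤ k ≤ n−1, and θ ∈ [0, π/2]. Suppose the distribution function F belongs to the class L_{1,γ} with γ ∈ (0,∞), i.e. q(t) = ℓ(t)/t where ℓ is slowly varying with ℓ(t) → γ. Then, as c → +∞, D_k(θ, c) = ∫_0^{cos²θ} exp(−∫_{c²}^{c²/y} q(t) dt)·f_k(y) dy converges to a_{γ,k}·Pr(B̃_{γ,k} < cos²θ), where a_{γ,k} = B(γ + k/2, (n−k)/2)/B(k/2, (n−k)/2) and B̃_{γ,k} is a Beta(γ + k/2, (n−k)/2)-distributed random variable. -/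
open Filter MeasureTheory Real Topology

/-!
Substituting `t = x s` turns `∫_x^{x/y} ℓ(t)/t dt` into `∫_1^{1/y} ℓ(x s)/s ds`, which tends to
`γ log (1/y)` by dominated convergence because `ℓ(x s) → γ`. Hence the factor
`exp (-∫_{c²}^{c²/y} q)` tends to `y ^ γ`; it lies in `[0, 1]` for large `c` since `ℓ` is eventually
positive, so dominated convergence against the Beta(k/2, (n-k)/2) density gives the limit
`∫_0^{cos²θ} y ^ γ f_k(y) dy`, and `y ^ γ y ^ (k/2 - 1) = y ^ (γ + k/2 - 1)` turns this into the
stated multiple of the Beta(γ + k/2, (n-k)/2) integral.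
-/

open scoped Interval

theorem intervalIntegrable_rpow_mul_one_sub_rpow {p q : ℝ} (hp : 0 < p) (hq : 0 < q) :
    IntervalIntegrable (fun x : ℝ => x ^ (p - 1) * (1 - x) ^ (q - 1)) volume 0 1 := by
  refine (Complex.betaIntegral_convergent (u := p) (v := q) (by simpa) (by simpa)).norm.congr_uIoo
    fun x hx => ?_
  rw [Set.uIoo_of_le zero_le_one] at hx
  simp only [norm_mul, ← Complex.ofReal_one, ← Complex.ofReal_sub,
    Complex.norm_cpow_eq_rpow_re_of_pos hx.1, Complex.norm_cpow_eq_rpow_re_of_pos (sub_pos.2 hx.2)]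
  simp

section

variable {ℓ : ℝ → ℝ} {γ : ℝ}

theorem eventually_continuousOn_intervalIntegral_div_self (hℓ : Measurable ℓ)
    (hℓγ : Tendsto ℓ atTop (𝓝 γ)) :
    ∀ᶠ a in atTop, ContinuousOn (fun b => ∫ t in a..b, ℓ t / t) (Set.Ici a) := by
  obtain ⟨T, hT⟩ := eventually_atTop.1 (hℓγ.norm.eventually (gt_mem_nhds (lt_add_one ‖γ‖)))
  filter_upwards [eventually_ge_atTop T, eventually_gt_atTop 0] with a haT ha0 b (hb : a ≤ b)
  have hint : IntervalIntegrable (fun t => ℓ t / t) volume a (b + 1) := by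
    refine IntervalIntegrable.mono_fun' (g := fun _ => (‖γ‖ + 1) / a) intervalIntegrable_const
      (hℓ.div measurable_id).aestronglyMeasurable ?_
    rw [Set.uIoc_of_le (by linarith)]
    refine (ae_restrict_mem measurableSet_Ioc).mono fun t (ht : a < t ∧ _) => ?_
    simp only [norm_div, Real.norm_of_nonneg (ha0.trans ht.1).le]
    exact div_le_div₀ (by positivity) (hT t (by linarith)).le ha0 ht.1.le
  refine (intervalIntegral.continuousWithinAt_primitive (b₁ := a) (b₂ := b + 1)
    (measure_singleton b) (by rwa [min_self, max_eq_right (by linarith)])).mono_of_mem_nhdsWithin ?_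
  exact mem_of_superset (inter_mem_nhdsWithin _ (Iio_mem_nhds (lt_add_one b)))
    fun t ht => ⟨ht.1, ht.2.le⟩

theorem tendsto_intervalIntegral_div_self (hℓ : Measurable ℓ) (hℓγ : Tendsto ℓ atTop (𝓝 γ))
    {a : ℝ} (ha : 0 < a) :
    Tendsto (fun x => ∫ t in x..a * x, ℓ t / t) atTop (𝓝 (γ * log a)) := by
  have hmin : ∀ s ∈ [[1, a]], min 1 a ≤ s := fun s hs => hs.1
  have hpos : ∀ s ∈ [[1, a]], 0 < s := fun s hs => (lt_min one_pos ha).trans_le (hmin s hs)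
  have hsubst : ∀ x > 0, ∫ s in 1..a, ℓ (x * s) / s = ∫ t in x..a * x, ℓ t / t := by
    intro x hx
    have hcomp :=
      intervalIntegral.smul_integral_comp_mul_left (fun t => ℓ t / t) x (a := 1) (b := a)
    rw [mul_one, mul_comm x a] at hcomp
    rw [← hcomp, ← intervalIntegral.integral_smul]
    refine intervalIntegral.integral_congr fun s hs => ?_
    have hs0 := hpos s hs
    simp only [smul_eq_mul]
    field_simp
  have hlog : ∫ s in 1..a, γ / s = γ * log a := by
    simp [div_eq_mul_inv, integral_inv_of_pos one_pos ha]
  refine hlog ▸ Tendsto.congr' ((eventually_gt_atTop 0).mono hsubst) ?_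
  obtain ⟨T, hT⟩ := eventually_atTop.1 (hℓγ.norm.eventually (gt_mem_nhds (lt_add_one ‖γ‖)))
  refine intervalIntegral.tendsto_integral_filter_of_dominated_convergence
    (fun s => (‖γ‖ + 1) / s) ?_ ?_ ?_ ?_
  · exact .of_forall fun x =>
      ((hℓ.comp (measurable_const_mul x)).div measurable_id).aestronglyMeasurable
  · filter_upwards [eventually_ge_atTop (T / min 1 a), eventually_gt_atTop 0] with x hxT hx0
    refine .of_forall fun s hs => ?_
    have hs0 := hpos s (Set.uIoc_subset_uIcc hs)
    have hxs : T ≤ x * s := by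
      calc T ≤ x * min 1 a := by rwa [div_le_iff₀ (lt_min one_pos ha)] at hxT
        _ ≤ x * s := by gcongr; exact hmin s (Set.uIoc_subset_uIcc hs)
    rw [norm_div, Real.norm_of_nonneg hs0.le]
    exact div_le_div_of_nonneg_right (hT _ hxs).le hs0.le
  · exact (continuousOn_const.div continuousOn_id fun s hs => (hpos s hs).ne').intervalIntegrable
  · refine .of_forall fun s hs => ?_
    have hs0 := hpos s (Set.uIoc_subset_uIcc hs)
    exact (hℓγ.comp (tendsto_id.atTop_mul_const hs0)).div_const s

theorem tendsto_intervalIntegral_exp_neg_integral_div_self_mul (hℓ : Measurable ℓ)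
    (hℓγ : Tendsto ℓ atTop (𝓝 γ)) (hℓ0 : ∀ᶠ t in atTop, 0 ≤ ℓ t) {g : ℝ → ℝ} {m : ℝ}
    (hm0 : 0 ≤ m) (hm1 : m ≤ 1) (hg : IntervalIntegrable g volume 0 m) :
    Tendsto (fun x => ∫ y in 0..m, exp (-∫ t in x..x / y, ℓ t / t) * g y) atTop
      (𝓝 (∫ y in 0..m, y ^ γ * g y)) := by
  have hmem : ∀ y ∈ Ι 0 m, 0 < y ∧ y ≤ 1 := fun y hy => by
    rw [Set.uIoc_of_le hm0] at hy; exact ⟨hy.1, hy.2.trans hm1⟩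
  have hle : ∀ x ≥ 0, ∀ y ∈ Ι 0 m, x ≤ x / y := fun x hx y hy =>
    le_div_self hx (hmem y hy).1 (hmem y hy).2
  refine intervalIntegral.tendsto_integral_filter_of_dominated_convergence
    (fun y => ‖g y‖) ?_ ?_ hg.norm ?_
  · filter_upwards [eventually_continuousOn_intervalIntegral_div_self hℓ hℓγ,
      eventually_ge_atTop 0] with x hx hx0
    have hcont : ContinuousOn (fun y => exp (-∫ t in x..x / y, ℓ t / t)) (Ι 0 m) :=
      (hx.comp (continuousOn_const.div continuousOn_id fun y hy => (hmem y hy).1.ne')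
        fun y hy => hle x hx0 y hy).neg.rexp
    exact (hcont.aestronglyMeasurable measurableSet_uIoc).mul hg.def'.aestronglyMeasurable
  · obtain ⟨T, hT⟩ := eventually_atTop.1 hℓ0
    filter_upwards [eventually_ge_atTop (max T 0)] with x hx
    refine .of_forall fun y hy => ?_
    have hx0 : 0 ≤ x := le_of_max_le_right hx
    have hI : 0 ≤ ∫ t in x..x / y, ℓ t / t :=
      intervalIntegral.integral_nonneg (hle x hx0 y hy) fun t ht =>
        div_nonneg (hT t (le_of_max_le_left (hx.trans ht.1))) (hx0.trans ht.1)
    rw [norm_mul, Real.norm_of_nonneg (exp_pos _).le]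
    exact mul_le_of_le_one_left (norm_nonneg _) (exp_le_one_iff.2 (neg_nonpos.2 hI))
  · refine .of_forall fun y hy => ?_
    have hy0 := (hmem y hy).1
    have hlim := (tendsto_intervalIntegral_div_self hℓ hℓγ (inv_pos.2 hy0)).neg.rexp
    rw [log_inv, mul_neg, neg_neg, mul_comm, ← rpow_def_of_pos hy0] at hlim
    simp only [div_eq_inv_mul _ y]
    exact hlim.mul_const (g y)

end

theorem beta_div_beta_mul_intervalIntegral {a b γ m : ℝ} (hγa : 0 < γ + a) (hb : 0 < b)
    (hm : 0 ≤ m) :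
    ProbabilityTheory.beta (γ + a) b / ProbabilityTheory.beta a b *
        ∫ y in 0..m, y ^ (γ + a - 1) * (1 - y) ^ (b - 1) / ProbabilityTheory.beta (γ + a) b =
      ∫ y in 0..m, y ^ γ * (y ^ (a - 1) * (1 - y) ^ (b - 1) / ProbabilityTheory.beta a b) := by
  have hB := (ProbabilityTheory.beta_pos hγa hb).ne'
  rw [← intervalIntegral.integral_const_mul]
  refine intervalIntegral.integral_congr_ae (.of_forall fun y hy => ?_)
  rw [Set.uIoc_of_le hm] at hy
  rw [add_sub_assoc, rpow_add hy.1]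
  field_simp

theorem Dk_limit_regularly_varying_general
    (n k : ℕ) (hk1 : 1 ≤ k) (hkn : k ≤ n - 1)
    (θ : ℝ)
    (γ : ℝ) (hγ : 0 < γ)
    (ℓ : ℝ → ℝ) (hℓmeas : Measurable ℓ)
    (hℓγ : Tendsto ℓ atTop (nhds γ))
    (q : ℝ → ℝ) (hq : ∀ t, q t = ℓ t / t)
    (Bfun : ℝ → ℝ → ℝ)
    (hBfun : ∀ p q', Bfun p q' = Real.Gamma p * Real.Gamma q' / Real.Gamma (p + q'))
    (fk : ℝ → ℝ)
    (hfk : ∀ y, fk y = y ^ ((k : ℝ) / 2 - 1) * (1 - y) ^ (((n : ℝ) - k) / 2 - 1) /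
      Bfun ((k : ℝ) / 2) (((n : ℝ) - k) / 2))
    (Dk : ℝ → ℝ → ℝ)
    (hDk : ∀ θ' c, Dk θ' c = ∫ y in (0 : ℝ)..(Real.cos θ' ^ 2),
      Real.exp (-∫ t in (c ^ 2)..(c ^ 2 / y), q t) * fk y) :
    Tendsto (fun c => Dk θ c) atTop
      (nhds ((Bfun (γ + (k : ℝ) / 2) (((n : ℝ) - k) / 2) /
          Bfun ((k : ℝ) / 2) (((n : ℝ) - k) / 2)) *
        ∫ y in (0 : ℝ)..(Real.cos θ ^ 2),
          y ^ (γ + (k : ℝ) / 2 - 1) * (1 - y) ^ (((n : ℝ) - k) / 2 - 1) /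
            Bfun (γ + (k : ℝ) / 2) (((n : ℝ) - k) / 2))) := by
  obtain rfl : Bfun = ProbabilityTheory.beta := funext₂ hBfun
  obtain rfl : q = fun t => ℓ t / t := funext hq
  obtain rfl : fk = _ := funext hfk
  obtain rfl : Dk = _ := funext₂ hDk
  have hk : (1 : ℝ) ≤ k := by exact_mod_cast hk1
  have hkn' : (k : ℝ) + 1 ≤ n := by exact_mod_cast (by omega : k + 1 ≤ n)
  have hm0 : 0 ≤ cos θ ^ 2 := sq_nonneg _
  have hm1 : cos θ ^ 2 ≤ 1 := cos_sq_le_one θ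
  have hfk_int := ((intervalIntegrable_rpow_mul_one_sub_rpow (p := (k : ℝ) / 2)
    (q := ((n : ℝ) - k) / 2) (by linarith) (by linarith)).mono_set
    (Set.uIcc_subset_uIcc_left (Set.mem_uIcc_of_le hm0 hm1))).div_const
    (ProbabilityTheory.beta ((k : ℝ) / 2) (((n : ℝ) - k) / 2))
  rw [beta_div_beta_mul_intervalIntegral (by linarith) (by linarith) hm0]
  exact (tendsto_intervalIntegral_exp_neg_integral_div_self_mul hℓmeas hℓγ
    (hℓγ.eventually (le_mem_nhds hγ)) hm0 hm1 hfk_int).comp (tendsto_pow_atTop two_ne_zero)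

/-- Fix `n ≥ 2`, `1 ≤ k ≤ n-1` and `θ ∈ [0,π/2]`.  If `F ∈ L_{1,γ}`
with `γ ∈ (0,∞)`, i.e. `q(t) = ℓ(t)/t` with `ℓ` slowly varying and `ℓ(t) → γ`, then
`D_k(θ,c) = ∫_0^{cos²θ} exp(-∫_{c²}^{c²/y} q) f_k(y) dy` converges, as `c → ∞`, to
`a_{γ,k}·Pr(B̃_{γ,k} < cos²θ)`, where `a_{γ,k} = B(γ+k/2,(n-k)/2)/B(k/2,(n-k)/2)`
and `B̃_{γ,k} ~ Beta(γ+k/2,(n-k)/2)` (so that the probability is the integral of the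
Beta(γ+k/2,(n-k)/2) density over `(0, cos²θ)`); here `f_k` is the Beta(k/2,(n-k)/2)
density and `B(p,q) = Γ(p)Γ(q)/Γ(p+q)`. -/
theorem Dk_limit_regularly_varying
    (n k : ℕ) (hn : 2 ≤ n) (hk1 : 1 ≤ k) (hkn : k ≤ n - 1)
    (θ : ℝ) (hθ : θ ∈ Set.Icc 0 (π / 2))
    (γ : ℝ) (hγ : 0 < γ)
    (ℓ : ℝ → ℝ) (hℓmeas : Measurable ℓ) (hℓpos : ∀ᶠ t in atTop, 0 < ℓ t)
    (hℓslow : SlowlyVarying ℓ) (hℓγ : Tendsto ℓ atTop (nhds γ))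
    (q : ℝ → ℝ) (hq : ∀ t, q t = ℓ t / t)
    (Bfun : ℝ → ℝ → ℝ)
    (hBfun : ∀ p q', Bfun p q' = Real.Gamma p * Real.Gamma q' / Real.Gamma (p + q'))
    (fk : ℝ → ℝ)
    (hfk : ∀ y, fk y = y ^ ((k : ℝ) / 2 - 1) * (1 - y) ^ (((n : ℝ) - k) / 2 - 1) /
      Bfun ((k : ℝ) / 2) (((n : ℝ) - k) / 2))
    (Dk : ℝ → ℝ → ℝ)
    (hDk : ∀ θ' c, Dk θ' c = ∫ y in (0 : ℝ)..(Real.cos θ' ^ 2),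
      Real.exp (-∫ t in (c ^ 2)..(c ^ 2 / y), q t) * fk y) :
    Tendsto (fun c => Dk θ c) atTop
      (nhds ((Bfun (γ + (k : ℝ) / 2) (((n : ℝ) - k) / 2) /
          Bfun ((k : ℝ) / 2) (((n : ℝ) - k) / 2)) *
        ∫ y in (0 : ℝ)..(Real.cos θ ^ 2),
          y ^ (γ + (k : ℝ) / 2 - 1) * (1 - y) ^ (((n : ℝ) - k) / 2 - 1) /
            Bfun (γ + (k : ℝ) / 2) (((n : ℝ) - k) / 2))) :=
  Dk_limit_regularly_varying_general n k hk1 hkn θ γ hγ ℓ hℓmeas hℓγ q hq Bfun hBfun fk hfk Dk hDk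
end

section
/- Let T_1 and T_2 be real random variables with the same continuous marginal distribution function F satisfying F(x) < 1 for all x, and define Δ(c) = (Pr(T_1 ≥ c) + Pr(T_2 ≥ c) − Pr(max(T_1,T_2) ≥ c))/(Pr(T_1 ≥ c) + Pr(T_2 ≥ c)). Suppose the upper tail dependence coefficient λ_U = lim_{u↑1} Pr(T_1 ≥ F^{-1}(u) | T_2 ≥ F^{-1}(u)) exists, where F^{-1}(u) = inf{x : F(x) ≥ u} is the quantile function. Then lim_{c→+∞} Δ(c) = λ_U/2. In particular, Δ(c) → 0 as c → +∞ if and only if T_1 and T_2 are upper tail-independent (λ_U = 0). -/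
/-!
Since the common marginal `F` is continuous, `Pr(Tᵢ ≥ x) = 1 - F x`, and by inclusion–exclusion
the numerator of `Δ(c)` is `Pr(T₁ ≥ c, T₂ ≥ c)`, so `Δ(c) = Pr(T₁ ≥ c, T₂ ≥ c) / (2 (1 - F c))`.
The quantile `F⁻¹(F c)` lies below `c` and has the same value of `F`, so lowering the threshold
from `c` to it changes each tail event only by a null set. Hence `Δ(c)` is half the conditional
tail probability at level `u = F c`, and `u ↑ 1` as `c → ∞`.
-/

open Filter MeasureTheory ProbabilityTheory Set Topology

lemma Monotone.csInf_superlevel_le_and_apply_eq {F : ℝ → ℝ} (hmono : Monotone F)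
    (hcont : Continuous F) {c : ℝ} (hbdd : BddBelow {x | F c ≤ F x}) :
    sInf {x | F c ≤ F x} ≤ c ∧ F (sInf {x | F c ≤ F x}) = F c := by
  have hc : c ∈ {x | F c ≤ F x} := le_refl (F c)
  have hle : sInf {x | F c ≤ F x} ≤ c := csInf_le hbdd hc
  exact ⟨hle, le_antisymm (hmono hle)
    ((isClosed_le continuous_const hcont).csInf_mem ⟨c, hc⟩ hbdd)⟩

lemma Monotone.bddBelow_superlevel {F : ℝ → ℝ} (hmono : Monotone F) (hF : Tendsto F atBot (𝓝 0))
    {y : ℝ} (hy : 0 < y) : BddBelow {x | y ≤ F x} := by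
  obtain ⟨x₀, hx₀⟩ := (hF.eventually (gt_mem_nhds hy)).exists
  exact ⟨x₀, fun x hx => le_of_not_ge fun hlt => (hx.trans (hmono hlt)).not_gt hx₀⟩

section

variable {Ω : Type*} [MeasurableSpace Ω] {P : Measure Ω}

lemma measureReal_inter_eq_of_subset_of_measureReal_ge [IsFiniteMeasure P]
    {s₁ s₂ t₁ t₂ : Set Ω}
    (h₁ : s₁ ⊆ t₁) (h₂ : s₂ ⊆ t₂) (ht₁ : P.real t₁ ≤ P.real s₁) (ht₂ : P.real t₂ ≤ P.real s₂)
    (hs₁ : NullMeasurableSet s₁ P) (hs₂ : NullMeasurableSet s₂ P) :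
    P.real (s₁ ∩ s₂) = P.real (t₁ ∩ t₂) := by
  rw [measureReal_def, measureReal_def,
    ENNReal.toReal_le_toReal (measure_ne_top _ _) (measure_ne_top _ _)] at ht₁ ht₂
  exact measureReal_congr ((ae_eq_of_subset_of_measure_ge h₁ ht₁ hs₁ (measure_ne_top _ _)).inter
    (ae_eq_of_subset_of_measure_ge h₂ ht₂ hs₂ (measure_ne_top _ _)))

lemma measureReal_le_add_sub_le_max [IsFiniteMeasure P] {T₁ T₂ : Ω → ℝ} (hT₂ : Measurable T₂)
    (c : ℝ) :
    P.real {ω | c ≤ T₁ ω} + P.real {ω | c ≤ T₂ ω} - P.real {ω | c ≤ max (T₁ ω) (T₂ ω)} =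
      P.real {ω | c ≤ T₁ ω ∧ c ≤ T₂ ω} := by
  have h := measureReal_union_add_inter (μ := P) (s := {ω | c ≤ T₁ ω})
    (t := {ω | c ≤ T₂ ω}) (hT₂ measurableSet_Ici)
  simp only [le_max_iff]
  rw [sub_eq_iff_eq_add', ← h]
  rfl

variable [IsProbabilityMeasure P]

lemma cdf_map_eq_measureReal {T : Ω → ℝ} (hT : Measurable T) (x : ℝ) :
    cdf (P.map T) x = P.real {ω | T ω ≤ x} := by
  have := Measure.isProbabilityMeasure_map (μ := P) hT.aemeasurable
  rw [cdf_eq_real, map_measureReal_apply hT measurableSet_Iic]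
  rfl

lemma measureReal_le_eq_one_sub_cdf {T : Ω → ℝ} (hT : Measurable T)
    (hcont : Continuous (cdf (P.map T))) (x : ℝ) :
    P.real {ω | x ≤ T ω} = 1 - cdf (P.map T) x := by
  have := Measure.isProbabilityMeasure_map (μ := P) hT.aemeasurable
  have h := (cdf (P.map T)).measure_Ici (tendsto_cdf_atTop _) x
  rw [measure_cdf, hcont.continuousWithinAt.leftLim_eq,
    Measure.map_apply hT measurableSet_Ici] at h
  rw [← ENNReal.toReal_ofReal (sub_nonneg.2 (cdf_le_one _ _)), ← h]
  rfl

lemma relativeError_eq_half_tailRatio {T₁ T₂ : Ω → ℝ} (hT₁ : Measurable T₁)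
    (hT₂ : Measurable T₂) {F : ℝ → ℝ} (hF₁ : ⇑(cdf (P.map T₁)) = F) (hF₂ : ⇑(cdf (P.map T₂)) = F)
    (hcont : Continuous F) {c : ℝ} (hc₀ : 0 < F c) (hc₁ : F c < 1) :
    (P.real {ω | c ≤ T₁ ω} + P.real {ω | c ≤ T₂ ω} - P.real {ω | c ≤ max (T₁ ω) (T₂ ω)}) /
        (P.real {ω | c ≤ T₁ ω} + P.real {ω | c ≤ T₂ ω}) =
      P.real {ω | sInf {x | F c ≤ F x} ≤ T₁ ω ∧ sInf {x | F c ≤ F x} ≤ T₂ ω} /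
        P.real {ω | sInf {x | F c ≤ F x} ≤ T₂ ω} / 2 := by
  set a := sInf {x | F c ≤ F x}
  have hmono : Monotone F := hF₁ ▸ monotone_cdf _
  obtain ⟨hac, hFa⟩ := hmono.csInf_superlevel_le_and_apply_eq hcont
    (hmono.bddBelow_superlevel (hF₁ ▸ tendsto_cdf_atBot _) hc₀)
  have surv₁ : ∀ x, P.real {ω | x ≤ T₁ ω} = 1 - F x :=
    hF₁ ▸ measureReal_le_eq_one_sub_cdf hT₁ (hF₁ ▸ hcont)
  have surv₂ : ∀ x, P.real {ω | x ≤ T₂ ω} = 1 - F x :=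
    hF₂ ▸ measureReal_le_eq_one_sub_cdf hT₂ (hF₂ ▸ hcont)
  have hjoint : P.real {ω | c ≤ T₁ ω ∧ c ≤ T₂ ω} = P.real {ω | a ≤ T₁ ω ∧ a ≤ T₂ ω} :=
    measureReal_inter_eq_of_subset_of_measureReal_ge (s₁ := {ω | c ≤ T₁ ω})
      (s₂ := {ω | c ≤ T₂ ω}) (t₁ := {ω | a ≤ T₁ ω}) (t₂ := {ω | a ≤ T₂ ω})
      (fun _ h => hac.trans h) (fun _ h => hac.trans h)
      (by rw [surv₁, surv₁, hFa]) (by rw [surv₂, surv₂, hFa])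
      (hT₁ measurableSet_Ici).nullMeasurableSet (hT₂ measurableSet_Ici).nullMeasurableSet
  have hpos : (1 : ℝ) - F c ≠ 0 := sub_ne_zero.2 hc₁.ne'
  rw [measureReal_le_add_sub_le_max hT₂, hjoint, surv₁, surv₂, surv₂, hFa]
  field_simp
  ring

end

/-- Let `T₁, T₂` have the same continuous marginal distribution
function `F` with `F x < 1` for all `x`, and let
`Δ(c) = (Pr(T₁≥c) + Pr(T₂≥c) - Pr(max(T₁,T₂)≥c)) / (Pr(T₁≥c) + Pr(T₂≥c))`.
If the upper tail dependence coefficient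
`λ_U = lim_{u↑1} Pr(T₁ ≥ F⁻¹(u) | T₂ ≥ F⁻¹(u))` exists, where
`F⁻¹(u) = inf{x : F(x) ≥ u}`, then `lim_{c→∞} Δ(c) = λ_U/2`; in particular
`Δ(c) → 0` iff `T₁, T₂` are upper tail-independent (`λ_U = 0`). -/
theorem relative_error_upper_tail_dependence
    {Ω : Type*} [MeasurableSpace Ω] (P : Measure Ω) [IsProbabilityMeasure P]
    (T₁ T₂ : Ω → ℝ) (hT₁ : Measurable T₁) (hT₂ : Measurable T₂)
    (F : ℝ → ℝ)
    (hF₁ : ∀ x, F x = (P {ω | T₁ ω ≤ x}).toReal)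
    (hF₂ : ∀ x, F x = (P {ω | T₂ ω ≤ x}).toReal)
    (hFcont : Continuous F) (hFlt : ∀ x, F x < 1)
    (Finv : ℝ → ℝ) (hFinv : ∀ u, Finv u = sInf {x : ℝ | u ≤ F x})
    (Δ : ℝ → ℝ)
    (hΔ : ∀ c, Δ c =
      ((P {ω | c ≤ T₁ ω}).toReal + (P {ω | c ≤ T₂ ω}).toReal -
          (P {ω | c ≤ max (T₁ ω) (T₂ ω)}).toReal) /
        ((P {ω | c ≤ T₁ ω}).toReal + (P {ω | c ≤ T₂ ω}).toReal))
    (lamU : ℝ)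
    (hlamU : Tendsto
      (fun u => (P {ω | Finv u ≤ T₁ ω ∧ Finv u ≤ T₂ ω}).toReal /
        (P {ω | Finv u ≤ T₂ ω}).toReal)
      (nhdsWithin 1 (Set.Iio 1)) (nhds lamU)) :
    Tendsto Δ atTop (nhds (lamU / 2)) ∧
    (Tendsto Δ atTop (nhds 0) ↔ lamU = 0) := by
  have hcdf₁ : ⇑(cdf (P.map T₁)) = F :=
    funext fun x => (cdf_map_eq_measureReal hT₁ x).trans (hF₁ x).symm
  have hcdf₂ : ⇑(cdf (P.map T₂)) = F :=
    funext fun x => (cdf_map_eq_measureReal hT₂ x).trans (hF₂ x).symm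
  have hFtop : Tendsto F atTop (𝓝 1) := hcdf₁ ▸ tendsto_cdf_atTop _
  have hFtop' : Tendsto F atTop (𝓝[<] 1) :=
    tendsto_nhdsWithin_iff.2 ⟨hFtop, Eventually.of_forall hFlt⟩
  have hlim : Tendsto Δ atTop (𝓝 (lamU / 2)) := by
    refine ((hlamU.comp hFtop').div_const 2).congr' ?_
    filter_upwards [hFtop.eventually (lt_mem_nhds one_pos)] with c hc
    rw [hΔ, Function.comp_apply, hFinv]
    exact (relativeError_eq_half_tailRatio hT₁ hT₂ hcdf₁ hcdf₂ hFcont hc (hFlt c)).symm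
  exact ⟨hlim, fun h => by linarith [tendsto_nhds_unique h hlim], fun h => by simpa [h] using hlim⟩
end
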